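/- Fix τ > 0 and δ > 0, constants γ ∈ (0,1), β ∈ (0,1), and a starting point (u⁰, v⁰) ∈ X × D. Assume f has bounded level sets, and consider the inexact alternating minimization iteration: as long as ‖∇_x q_τ(u^ℓ, v^ℓ)‖ > δ, choose a positive definite self-adjoint linear map H_ℓ on X satisfying c₁‖z‖² ≤ ⟨z, H_ℓ z⟩ ≤ c₂‖z‖² for all z ∈ X (with fixed constants 0 < c₁ ≤ c₂ independent of ℓ), set d^ℓ = −H_ℓ(∇_x q_τ(u^ℓ, v^ℓ)), compute the Armijo step size α_ℓ = max{β^j : j ∈ ℕ, q_τ(u^ℓ + β^j d^ℓ, v^ℓ) ≤ q_τ(u^ℓ, v^ℓ) + γ β^j ⟨∇_x q_τ(u^ℓ, v^ℓ), d^ℓ⟩}, set u^{ℓ+1} = u^ℓ + α_ℓ d^ℓ, and choose v^{ℓ+1} ∈ Π_D(u^{ℓ+1}). Then this iteration cannot continue indefinitely: there exists a finite index ℓ with ‖∇_x q_τ(u^ℓ, v^ℓ)‖ ≤ δ; in particular the iteration produces a pair (x⁺, y⁺) with ‖∇_x q_τ(x⁺, y⁺)‖ ≤ δ and y⁺ ∈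 argmin_{y ∈ D} q_τ(x⁺, y). -/

import Mathlib

open Filter Topology RealInnerProductSpace

noncomputable section

/-- The (set-valued) Euclidean projection of `x` onto `D`:
`Π_D(x) = argmin_{z ∈ D} ‖z - x‖`. -/
def projSet {E : Type*} [NormedAddCommGroup E] (D : Set E) (x : E) : Set E :=
  {z | z ∈ D ∧ ∀ w ∈ D, ‖z - x‖ ≤ ‖w - x‖}

/-- The limiting (Mordukhovich) normal cone to `D` at `x`:
`N_D^lim(x) = limsup_{v → x} cone(v - Π_D(v))`, empty outside `D`. -/
def limNormalCone {E : Type*} [NormedAddCommGroup E] [NormedSpace ℝ E]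
    (D : Set E) (x : E) : Set E :=
  {w | x ∈ D ∧ ∃ v ws : ℕ → E,
    Tendsto v atTop (𝓝 x) ∧ Tendsto ws atTop (𝓝 w) ∧
    ∀ j, ∃ t : ℝ, ∃ p, 0 ≤ t ∧ p ∈ projSet D (v j) ∧ ws j = t • (v j - p)}

/-- The normal cone (of convex analysis) to the convex set `C` at `y`, empty outside `C`. -/
def convNormalCone {E : Type*} [NormedAddCommGroup E] [InnerProductSpace ℝ E]
    (C : Set E) (y : E) : Set E :=
  {l | y ∈ C ∧ ∀ c ∈ C, ⟪l, c - y⟫ ≤ 0}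

variable {X Y : Type*} [NormedAddCommGroup X] [InnerProductSpace ℝ X] [FiniteDimensional ℝ X]
  [NormedAddCommGroup Y] [InnerProductSpace ℝ Y] [FiniteDimensional ℝ Y]

/-- The partial penalty function
`q_τ(x,y) = f(x) + (τ/2) (‖x-y‖² + dist_C(G(x))²)`, where `dist_C(w) = ‖w - P_C(w)‖`
and `PC` denotes the Euclidean projection onto `C`. -/
def qpen (f : X → ℝ) (G : X → Y) (PC : Y → Y) (τ : ℝ) (x y : X) : ℝ :=
  f x + τ / 2 * (‖x - y‖ ^ 2 + ‖G x - PC (G x)‖ ^ 2)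

/-- The gradient `∇_x q_τ(x, y)` of the penalty function w.r.t. the first block. -/
def gradqx (f : X → ℝ) (G : X → Y) (PC : Y → Y) (τ : ℝ) (x y : X) : X :=
  gradient (fun u => qpen f G PC τ u y) x

/-- The Armijo acceptability condition for a step size `a` along direction `d` at `(u,v)`. -/
def armijoCond (f : X → ℝ) (G : X → Y) (PC : Y → Y) (τ γ : ℝ) (u v d : X) (a : ℝ) : Prop :=
  qpen f G PC τ (u + a • d) v ≤ qpen f G PC τ u v + γ * a * ⟪gradqx f G PC τ u v, d⟫

/-! Both half-steps lower the penalty: the projection step minimizes `q_τ(u, ·)` over `D`, and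
the Armijo step lowers `q_τ(·, v)` by `γ α ⟪∇, d⟫ ≤ -γ α c₁ ‖∇‖²`. Hence `f(uˡ) ≤ q_τ(u⁰, v⁰)`,
so the iterates stay in a compact set on which `q_τ` is bounded below and its gradient is
uniformly continuous (`dist_C²` is `C¹` with gradient `2 (w - P_C w)`, by convexity of `C`).
If the gradient stayed above `δ`, uniform continuity and the mean value theorem would make every
step `β^j ≤ ā` acceptable for one fixed `ā > 0`, so each iteration would lower `q_τ` by a fixed
amount, which is incompatible with boundedness from below. -/

section Projection

variable {E : Type*} [NormedAddCommGroup E] [InnerProductSpace ℝ E] {C : Set E}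

theorem inner_sub_nonpos_of_mem_projSet (hC : Convex ℝ C) {w p c : E} (hp : p ∈ projSet C w)
    (hc : c ∈ C) : ⟪w - p, c - p⟫ ≤ 0 := by
  have : Nonempty C := ⟨⟨p, hp.1⟩⟩
  refine (norm_eq_iInf_iff_real_inner_le_zero hC hp.1).1 (le_antisymm ?_ ?_) c hc
  · exact le_ciInf fun c' => by simpa only [norm_sub_rev w] using hp.2 c' c'.2
  · exact ciInf_le ⟨0, Set.forall_mem_range.2 fun _ => norm_nonneg _⟩ (⟨p, hp.1⟩ : C)

theorem norm_sub_le_of_mem_projSet (hC : Convex ℝ C) {w w' p p' : E} (hp : p ∈ projSet C w)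
    (hp' : p' ∈ projSet C w') : ‖p - p'‖ ≤ ‖w - w'‖ := by
  have h := inner_sub_nonpos_of_mem_projSet hC hp hp'.1
  have h' := inner_sub_nonpos_of_mem_projSet hC hp' hp.1
  have key : ‖p - p'‖ ^ 2 ≤ ‖w - w'‖ * ‖p - p'‖ := by
    have hcs := real_inner_le_norm (w - w') (p - p')
    rw [← real_inner_self_eq_norm_sq]
    simp only [inner_sub_left, inner_sub_right, real_inner_comm] at h h' hcs ⊢
    linarith
  nlinarith [norm_nonneg (w - w'), norm_nonneg (p - p')]

variable {P : E → E}

theorem lipschitzWith_one_of_mem_projSet (hC : Convex ℝ C) (hP : ∀ w, P w ∈ projSet C w) :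
    LipschitzWith 1 P :=
  LipschitzWith.of_dist_le_mul fun w w' => by
    simpa [dist_eq_norm] using norm_sub_le_of_mem_projSet hC (hP w) (hP w')

/-- Upper bound: `P w` competes for `w + k`. Lower bound: `P (w + k)` competes for `w`, and `P`
is nonexpansive. -/
theorem abs_norm_sub_proj_sq_sub_le (hC : Convex ℝ C) (hP : ∀ w, P w ∈ projSet C w) (w k : E) :
    |‖w + k - P (w + k)‖ ^ 2 - ‖w - P w‖ ^ 2 - 2 * ⟪w - P w, k⟫| ≤ ‖k‖ ^ 2 := by
  have hup : ‖w + k - P (w + k)‖ ≤ ‖w + k - P w‖ := by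
    simpa only [norm_sub_rev (w + k)] using (hP (w + k)).2 (P w) (hP w).1
  have hlow : ‖w - P w‖ ≤ ‖w - P (w + k)‖ := by
    simpa only [norm_sub_rev w] using (hP w).2 (P (w + k)) (hP (w + k)).1
  have hexp : ‖w + k - P w‖ ^ 2 = ‖w - P w‖ ^ 2 + 2 * ⟪w - P w, k⟫ + ‖k‖ ^ 2 := by
    rw [show w + k - P w = (w - P w) + k by abel, norm_add_sq_real]
  have hexp' : ‖w - P (w + k)‖ ^ 2
      = ‖w + k - P (w + k)‖ ^ 2 - 2 * ⟪w + k - P (w + k), k⟫ + ‖k‖ ^ 2 := by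
    rw [show w - P (w + k) = (w + k - P (w + k)) - k by abel, norm_sub_sq_real]
  have hinner : ⟪w + k - P (w + k), k⟫
      = ⟪w - P w, k⟫ + ‖k‖ ^ 2 - ⟪P (w + k) - P w, k⟫ := by
    rw [← real_inner_self_eq_norm_sq, ← inner_add_left, ← inner_sub_left]
    congr 1
    abel
  have hP_lip : ⟪P (w + k) - P w, k⟫ ≤ ‖k‖ ^ 2 := by
    have := norm_sub_le_of_mem_projSet hC (hP (w + k)) (hP w)
    rw [add_sub_cancel_left] at this
    nlinarith [real_inner_le_norm (P (w + k) - P w) k, norm_nonneg k]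
  rw [abs_le]
  constructor <;>
    nlinarith [pow_le_pow_left₀ (norm_nonneg _) hup 2, pow_le_pow_left₀ (norm_nonneg _) hlow 2]

theorem hasFDerivAt_norm_sub_proj_sq (hC : Convex ℝ C) (hP : ∀ w, P w ∈ projSet C w) (w : E) :
    HasFDerivAt (fun z => ‖z - P z‖ ^ 2) ((2 : ℝ) • innerSL ℝ (w - P w)) w := by
  rw [hasFDerivAt_iff_isLittleO_nhds_zero]
  refine Asymptotics.IsBigO.trans_isLittleO ?_ (Asymptotics.isLittleO_norm_pow_id one_lt_two)
  refine Asymptotics.IsBigO.of_bound 1 (Eventually.of_forall fun k => ?_)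
  simpa [inner_sub_left] using abs_norm_sub_proj_sq_sub_le hC hP w k

end Projection

section NormedGroup

variable {E F : Type*} [NormedAddCommGroup E] [NormedAddCommGroup F]
  {f : E → ℝ} {G : E → F} {PC : F → F} {τ : ℝ}

theorem le_qpen (hτ : 0 ≤ τ) (x y : E) : f x ≤ qpen f G PC τ x y := by
  unfold qpen
  have : 0 ≤ τ / 2 * (‖x - y‖ ^ 2 + ‖G x - PC (G x)‖ ^ 2) := by positivity
  linarith

theorem qpen_le_of_mem_projSet {D : Set E} (hτ : 0 ≤ τ) {x y y' : E} (hy : y ∈ projSet D x)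
    (hy' : y' ∈ D) : qpen f G PC τ x y ≤ qpen f G PC τ x y' := by
  have : ‖x - y‖ ≤ ‖x - y'‖ := by simpa only [norm_sub_rev x] using hy.2 y' hy'
  unfold qpen
  gcongr

theorem isBounded_range_of_mem_projSet {D : Set E} {u v : ℕ → E}
    (hu : Bornology.IsBounded (Set.range u)) (hv0 : v 0 ∈ D)
    (hv : ∀ ℓ, v (ℓ + 1) ∈ projSet D (u (ℓ + 1))) : Bornology.IsBounded (Set.range v) := by
  obtain ⟨R, hR, huR⟩ := hu.exists_pos_norm_le
  rw [Set.forall_mem_range] at huR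
  refine isBounded_iff_forall_norm_le.2 ⟨‖v 0‖ + 2 * R, Set.forall_mem_range.2 fun ℓ => ?_⟩
  cases ℓ with
  | zero => linarith
  | succ ℓ =>
    have hclose : ‖v (ℓ + 1) - u (ℓ + 1)‖ ≤ ‖v 0 - u (ℓ + 1)‖ := (hv ℓ).2 _ hv0
    have := norm_sub_norm_le (v (ℓ + 1)) (u (ℓ + 1))
    linarith [norm_sub_le (v 0) (u (ℓ + 1)), huR (ℓ + 1)]

end NormedGroup

section Penalty

variable {f : X → ℝ} {G : X → Y} {C : Set Y} {PC : Y → Y} {τ : ℝ}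

theorem hasGradientAt_qpen (hf : Differentiable ℝ f) (hG : Differentiable ℝ G)
    (hC : Convex ℝ C) (hPC : ∀ w, PC w ∈ projSet C w) (x y : X) :
    HasGradientAt (fun z => qpen f G PC τ z y)
      (gradient f x + τ • (x - y) + τ • (fderiv ℝ G x).adjoint (G x - PC (G x))) x := by
  have hsq := ((hasFDerivAt_id x).sub_const y).norm_sq
  have hdist := (hasFDerivAt_norm_sub_proj_sq hC hPC (G x)).comp x (hG x).hasFDerivAt
  rw [hasGradientAt_iff_hasFDerivAt]
  refine ((hf x).hasFDerivAt.add ((hsq.add hdist).const_mul (τ / 2))).congr_fderiv ?_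
  ext h
  simp only [id_eq, map_sub, ContinuousLinearMap.comp_id, ContinuousLinearMap.smul_comp,
    ContinuousLinearMap.sub_comp, smul_add, add_apply, smul_apply, sub_apply, coe_innerSL_apply,
    nsmul_eq_mul, Nat.cast_ofNat, smul_eq_mul, ContinuousLinearMap.comp_apply, gradient, map_add,
    LinearIsometryEquiv.apply_symm_apply, map_smul, InnerProductSpace.toDual_apply_apply,
    ContinuousLinearMap.adjoint_inner_left]
  ring

theorem gradqx_eq (hf : Differentiable ℝ f) (hG : Differentiable ℝ G)
    (hC : Convex ℝ C) (hPC : ∀ w, PC w ∈ projSet C w) (x y : X) :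
    gradqx f G PC τ x y
      = gradient f x + τ • (x - y) + τ • (fderiv ℝ G x).adjoint (G x - PC (G x)) :=
  (hasGradientAt_qpen hf hG hC hPC x y).gradient

theorem hasGradientAt_gradqx (hf : Differentiable ℝ f) (hG : Differentiable ℝ G)
    (hC : Convex ℝ C) (hPC : ∀ w, PC w ∈ projSet C w) (x y : X) :
    HasGradientAt (fun z => qpen f G PC τ z y) (gradqx f G PC τ x y) x :=
  (hasGradientAt_qpen hf hG hC hPC x y).differentiableAt.hasGradientAt

theorem continuous_gradqx (hf : ContDiff ℝ 1 f) (hG : ContDiff ℝ 1 G)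
    (hC : Convex ℝ C) (hPC : ∀ w, PC w ∈ projSet C w) :
    Continuous fun p : X × X => gradqx f G PC τ p.1 p.2 := by
  simp only [gradqx_eq (hf.differentiable one_ne_zero) (hG.differentiable one_ne_zero) hC hPC]
  have hgrad : Continuous (gradient f) :=
    (InnerProductSpace.toDual ℝ X).symm.continuous.comp (hf.continuous_fderiv one_ne_zero)
  have hadj : Continuous fun x => (fderiv ℝ G x).adjoint :=
    ContinuousLinearMap.adjoint.continuous.comp (hG.continuous_fderiv one_ne_zero)
  have hPC : Continuous PC := (lipschitzWith_one_of_mem_projSet hC hPC).continuous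
  have hG := hG.continuous
  fun_prop

end Penalty

section Descent

variable {E : Type*} [NormedAddCommGroup E] [InnerProductSpace ℝ E]

theorem ContinuousLinearMap.norm_le_of_inner_self_le {H : E →L[ℝ] E} {c : ℝ} (hc : 0 ≤ c)
    (hH : ∀ z w, ⟪H z, w⟫ = ⟪z, H w⟫) (hpos : ∀ z, 0 ≤ ⟪z, H z⟫)
    (hle : ∀ z, ⟪z, H z⟫ ≤ c * ‖z‖ ^ 2) : ‖H‖ ≤ c := by
  rw [H.norm_eq_iSup_rayleighQuotient hH]
  refine ciSup_le fun z => ?_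
  rw [rayleighQuotient, reApplyInnerSelf_apply, RCLike.re_to_real, real_inner_comm,
    abs_div, abs_of_nonneg (hpos z), abs_sq]
  rcases eq_or_ne z 0 with rfl | hz
  · simpa using hc
  · exact div_le_of_le_mul₀ (by positivity) hc (hle z)

theorem inner_neg_apply_le_and_norm_neg_apply_le {H : E →L[ℝ] E} {c₁ c₂ : ℝ} (hc₁ : 0 ≤ c₁)
    (hc₂ : 0 ≤ c₂) (hH : ∀ z w, ⟪H z, w⟫ = ⟪z, H w⟫)
    (hHc : ∀ z, c₁ * ‖z‖ ^ 2 ≤ ⟪z, H z⟫ ∧ ⟪z, H z⟫ ≤ c₂ * ‖z‖ ^ 2) (z : E) :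
    ⟪z, -H z⟫ ≤ -(c₁ * ‖z‖ ^ 2) ∧ ‖-H z‖ ≤ c₂ * ‖z‖ := by
  rw [inner_neg_right, norm_neg]
  refine ⟨neg_le_neg (hHc z).1, H.le_of_opNorm_le ?_ z⟩
  exact H.norm_le_of_inner_self_le hc₂ hH
    (fun z => (by positivity : 0 ≤ c₁ * ‖z‖ ^ 2).trans (hHc z).1) (fun z => (hHc z).2)

variable [CompleteSpace E]

theorem hasDerivAt_comp_add_smul {φ : E → ℝ} {g : E → E} (hφ : ∀ x, HasGradientAt φ (g x) x)
    (x d : E) (t : ℝ) :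
    HasDerivAt (fun r : ℝ => φ (x + r • d)) ⟪g (x + t • d), d⟫ t := by
  have hφ' := hφ (x + t • d)
  rw [hasGradientAt_iff_hasFDerivAt] at hφ'
  simpa [Function.comp_def] using
    hφ'.comp_hasDerivAt t (((hasDerivAt_id t).smul_const d).const_add x)

theorem armijo_of_norm_gradient_sub_mul_le {φ : E → ℝ} {g : E → E}
    (hφ : ∀ x, HasGradientAt φ (g x) x) {x d : E} {γ s : ℝ} (hs : 0 < s)
    (hg : ∀ t ∈ Set.Ioo 0 s, ‖g (x + t • d) - g x‖ * ‖d‖ ≤ (1 - γ) * -⟪g x, d⟫) :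
    φ (x + s • d) ≤ φ x + γ * s * ⟪g x, d⟫ := by
  obtain ⟨t, ht, hmvt⟩ := exists_hasDerivAt_eq_slope (fun r : ℝ => φ (x + r • d))
    (fun t => ⟪g (x + t • d), d⟫) hs
    (fun r _ => (hasDerivAt_comp_add_smul hφ x d r).continuousAt.continuousWithinAt)
    (fun r _ => hasDerivAt_comp_add_smul hφ x d r)
  have hinc : φ (x + s • d) - φ x = s * ⟪g (x + t • d), d⟫ := by
    rw [hmvt, zero_smul, add_zero, sub_zero]
    field_simp
  have hsplit : ⟪g (x + t • d), d⟫ = ⟪g x, d⟫ + ⟪g (x + t • d) - g x, d⟫ := by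
    rw [inner_sub_left]; ring
  have hcs := real_inner_le_norm (g (x + t • d) - g x) d
  nlinarith [hg t ht]

end Descent

theorem not_bddBelow_range_of_le_sub {a : ℕ → ℝ} {Δ : ℝ} (hΔ : 0 < Δ)
    (h : ∀ n, a (n + 1) ≤ a n - Δ) : ¬BddBelow (Set.range a) := by
  have hle : ∀ n : ℕ, a n ≤ a 0 - n * Δ := by
    intro n
    induction n with
    | zero => simp
    | succ n ih => push_cast; linarith [h n]
  rintro ⟨m, hm⟩
  obtain ⟨n, hn⟩ := exists_nat_gt ((a 0 - m) / Δ)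
  rw [div_lt_iff₀ hΔ] at hn
  linarith [hm ⟨n, rfl⟩, hle n]

section UniformArmijo

variable {E P : Type*} [NormedAddCommGroup E] [InnerProductSpace ℝ E] [CompleteSpace E]
  [PseudoMetricSpace P]

theorem exists_uniform_armijo_step {φ : E → P → ℝ} {g : E → P → E}
    (hφ : ∀ x y, HasGradientAt (φ · y) (g x y) x) (hg : Continuous fun p : E × P => g p.1 p.2)
    {K : Set (E × P)} (hK : IsCompact K) {γ δ c₁ c₂ : ℝ} (hγ : γ < 1) (hδ : 0 < δ)
    (hc₁ : 0 < c₁) (hc₂ : 0 < c₂) :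
    ∃ ā > 0, ∀ x y, (x, y) ∈ K → ∀ d : E, δ ≤ ‖g x y‖ →
      ⟪g x y, d⟫ ≤ -(c₁ * ‖g x y‖ ^ 2) → ‖d‖ ≤ c₂ * ‖g x y‖ →
      ∀ s ∈ Set.Ioc 0 ā, φ (x + s • d) y ≤ φ x y + γ * s * ⟪g x y, d⟫ := by
  obtain ⟨M, hM, hgM⟩ := (hK.image hg).isBounded.exists_pos_norm_le
  set ε := (1 - γ) * c₁ * δ / c₂
  have hε : 0 < ε := by have : 0 < 1 - γ := sub_pos.2 hγ; positivity
  obtain ⟨ρ, hρ, hgρ⟩ := Metric.mem_uniformity_dist.1 <|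
    hK.uniformContinuousAt_of_continuousAt _ (fun p _ => hg.continuousAt)
      (Metric.dist_mem_uniformity hε)
  -- `‖d‖ ≤ c₂ M` on `K`, so steps `s ≤ ρ / (c₂ M)` stay within the modulus `ρ` of `g` at `K`
  refine ⟨ρ / (c₂ * M), by positivity, fun x y hxy d hδg hdesc hd s hs => ?_⟩
  refine armijo_of_norm_gradient_sub_mul_le (hφ · y) hs.1 fun t ht => ?_
  have hstep : ‖t • d‖ < ρ := by
    calc ‖t • d‖ = t * ‖d‖ := by rw [norm_smul, Real.norm_of_nonneg ht.1.le]
      _ ≤ t * (c₂ * M) := mul_le_mul_of_nonneg_left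
        (hd.trans (mul_le_mul_of_nonneg_left (hgM _ ⟨_, hxy, rfl⟩) hc₂.le)) ht.1.le
      _ < ρ / (c₂ * M) * (c₂ * M) := by gcongr; exact ht.2.trans_le hs.2
      _ = ρ := div_mul_cancel₀ _ (by positivity)
  have hclose : ‖g (x + t • d) y - g x y‖ < ε := by
    have hdist : dist (x, y) (x + t • d, y) < ρ := by
      simpa [Prod.dist_eq, dist_eq_norm] using hstep
    simpa [dist_eq_norm, norm_sub_rev (g x y)] using hgρ hdist hxy
  calc ‖g (x + t • d) y - g x y‖ * ‖d‖ ≤ ε * (c₂ * ‖g x y‖) :=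
        mul_le_mul hclose.le hd (norm_nonneg _) hε.le
    _ = (1 - γ) * c₁ * (δ * ‖g x y‖) := by simp only [ε]; field_simp
    _ ≤ (1 - γ) * c₁ * (‖g x y‖ * ‖g x y‖) := by gcongr
    _ ≤ (1 - γ) * -⟪g x y, d⟫ := by nlinarith

theorem exists_norm_gradient_lt_of_armijo {φ : E → P → ℝ} {g : E → P → E}
    (hφ : ∀ x y, HasGradientAt (φ · y) (g x y) x) (hg : Continuous fun p : E × P => g p.1 p.2)
    {K : Set (E × P)} (hK : IsCompact K) {γ β δ c₁ c₂ : ℝ} (hγ : 0 < γ ∧ γ < 1)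
    (hβ : 0 < β ∧ β < 1) (hδ : 0 < δ) (hc₁ : 0 < c₁) (hc₂ : 0 < c₂)
    {x d : ℕ → E} {y : ℕ → P} {α : ℕ → ℝ} (hxy : ∀ ℓ, (x ℓ, y ℓ) ∈ K)
    (hbdd : BddBelow (Set.range fun ℓ => φ (x ℓ) (y ℓ)))
    (hdir : ∀ ℓ, ⟪g (x ℓ) (y ℓ), d ℓ⟫ ≤ -(c₁ * ‖g (x ℓ) (y ℓ)‖ ^ 2) ∧
      ‖d ℓ‖ ≤ c₂ * ‖g (x ℓ) (y ℓ)‖)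
    (hα : ∀ ℓ (j : ℕ), φ (x ℓ + β ^ j • d ℓ) (y ℓ) ≤
      φ (x ℓ) (y ℓ) + γ * β ^ j * ⟪g (x ℓ) (y ℓ), d ℓ⟫ → β ^ j ≤ α ℓ)
    (hdesc : ∀ ℓ, φ (x (ℓ + 1)) (y (ℓ + 1)) ≤ φ (x ℓ) (y ℓ) + γ * α ℓ * ⟪g (x ℓ) (y ℓ), d ℓ⟫) :
    ∃ ℓ, ‖g (x ℓ) (y ℓ)‖ < δ := by
  by_contra! hbig
  obtain ⟨ā, hā, harm⟩ := exists_uniform_armijo_step hφ hg hK hγ.2 hδ hc₁ hc₂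
  obtain ⟨j, hj⟩ := exists_pow_lt_of_lt_one hā hβ.2
  have hβj : 0 < β ^ j := pow_pos hβ.1 j
  have hα_ge ℓ : β ^ j ≤ α ℓ :=
    hα ℓ j (harm _ _ (hxy ℓ) _ (hbig ℓ) (hdir ℓ).1 (hdir ℓ).2 _ ⟨hβj, hj.le⟩)
  refine not_bddBelow_range_of_le_sub (mul_pos (mul_pos hγ.1 hβj) (mul_pos hc₁ (pow_pos hδ 2)))
    (fun ℓ => ?_) hbdd
  have hγα : 0 ≤ γ * α ℓ := mul_nonneg hγ.1.le (hβj.trans_le (hα_ge ℓ)).le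
  have : γ * β ^ j * (c₁ * δ ^ 2) ≤ γ * α ℓ * (c₁ * ‖g (x ℓ) (y ℓ)‖ ^ 2) :=
    mul_le_mul (mul_le_mul_of_nonneg_left (hα_ge ℓ) hγ.1.le)
      (mul_le_mul_of_nonneg_left (pow_le_pow_left₀ hδ.le (hbig ℓ) 2) hc₁.le) (by positivity) hγα
  nlinarith [hdesc ℓ, mul_le_mul_of_nonneg_left (hdir ℓ).1 hγα]

end UniformArmijo

theorem alternating_minimization_terminates_general
    (f : X → ℝ) (G : X → Y) (C : Set Y) (D : Set X)
    (hf : ContDiff ℝ 1 f) (hG : ContDiff ℝ 1 G)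
    (hCconv : Convex ℝ C)
    (PC : Y → Y) (hPC : ∀ w, PC w ∈ C ∧ ∀ c ∈ C, ‖PC w - w‖ ≤ ‖c - w‖)
    (hlev : ∀ η : ℝ, Bornology.IsBounded {x : X | f x ≤ η})
    (τ δ γ β : ℝ) (hτ : 0 < τ) (hδ : 0 < δ) (hγ : 0 < γ ∧ γ < 1) (hβ : 0 < β ∧ β < 1)
    (c₁ c₂ : ℝ) (hc₁ : 0 < c₁) (hc₂ : 0 < c₂)
    (u v d : ℕ → X) (H : ℕ → X →L[ℝ] X) (α : ℕ → ℝ)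
    (hv0 : v 0 ∈ D)
    (hself : ∀ ℓ, ∀ z w : X, ⟪(H ℓ) z, w⟫ = ⟪z, (H ℓ) w⟫)
    (heig : ∀ ℓ, ∀ z : X, c₁ * ‖z‖ ^ 2 ≤ ⟪z, (H ℓ) z⟫ ∧ ⟪z, (H ℓ) z⟫ ≤ c₂ * ‖z‖ ^ 2)
    (hd : ∀ ℓ, d ℓ = -(H ℓ) (gradqx f G PC τ (u ℓ) (v ℓ)))
    (hα : ∀ ℓ, (∃ j : ℕ, α ℓ = β ^ j ∧
        armijoCond f G PC τ γ (u ℓ) (v ℓ) (d ℓ) (β ^ j)) ∧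
      ∀ j : ℕ, armijoCond f G PC τ γ (u ℓ) (v ℓ) (d ℓ) (β ^ j) → β ^ j ≤ α ℓ)
    (hu : ∀ ℓ, u (ℓ + 1) = u ℓ + α ℓ • d ℓ)
    (hv : ∀ ℓ, v (ℓ + 1) ∈ projSet D (u (ℓ + 1))) :
    ∃ ℓ : ℕ, ‖gradqx f G PC τ (u ℓ) (v ℓ)‖ ≤ δ ∧ v ℓ ∈ D ∧
      ∀ yy ∈ D, qpen f G PC τ (u ℓ) (v ℓ) ≤ qpen f G PC τ (u ℓ) yy := by
  set g := fun ℓ => gradqx f G PC τ (u ℓ) (v ℓ)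
  set q := fun ℓ => qpen f G PC τ (u ℓ) (v ℓ)
  have hvD : ∀ ℓ, v ℓ ∈ D := fun | 0 => hv0 | ℓ + 1 => (hv ℓ).1
  have hdir ℓ : ⟪g ℓ, d ℓ⟫ ≤ -(c₁ * ‖g ℓ‖ ^ 2) ∧ ‖d ℓ‖ ≤ c₂ * ‖g ℓ‖ := by
    rw [hd ℓ]
    exact inner_neg_apply_le_and_norm_neg_apply_le hc₁.le hc₂.le (hself ℓ) (heig ℓ) _
  have hdesc ℓ : q (ℓ + 1) ≤ q ℓ + γ * α ℓ * ⟪g ℓ, d ℓ⟫ := by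
    obtain ⟨j, hj, harm⟩ := (hα ℓ).1
    calc q (ℓ + 1) ≤ qpen f G PC τ (u (ℓ + 1)) (v ℓ) :=
          qpen_le_of_mem_projSet hτ.le (hv ℓ) (hvD ℓ)
      _ ≤ q ℓ + γ * α ℓ * ⟪g ℓ, d ℓ⟫ := by rw [hu, hj]; exact harm
  have hdrop ℓ : γ * α ℓ * ⟪g ℓ, d ℓ⟫ ≤ 0 := by
    obtain ⟨j, hj, -⟩ := (hα ℓ).1
    exact mul_nonpos_of_nonneg_of_nonpos (hj ▸ mul_nonneg hγ.1.le (pow_nonneg hβ.1.le j))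
      ((hdir ℓ).1.trans (neg_nonpos.2 (by positivity)))
  have hq : Antitone q := antitone_nat_of_succ_le fun ℓ =>
    (hdesc ℓ).trans (add_le_of_nonpos_right (hdrop ℓ))
  have hub : Bornology.IsBounded (Set.range u) := (hlev (q 0)).subset <|
    Set.range_subset_iff.2 fun ℓ => (le_qpen hτ.le _ _).trans (hq ℓ.zero_le)
  obtain ⟨m, hm⟩ := hub.isCompact_closure.bddBelow_image hf.continuous.continuousOn
  -- the argument starts at `ℓ = 1`, where `v ℓ` already minimizes `q_τ(u ℓ, ·)` over `D`
  obtain ⟨ℓ, hℓ⟩ := exists_norm_gradient_lt_of_armijo (x := fun ℓ => u (ℓ + 1))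
    (y := fun ℓ => v (ℓ + 1)) (d := fun ℓ => d (ℓ + 1)) (α := fun ℓ => α (ℓ + 1))
    (hasGradientAt_gradqx (hf.differentiable one_ne_zero) (hG.differentiable one_ne_zero)
      hCconv hPC)
    (continuous_gradqx hf hG hCconv hPC)
    (hub.prod (isBounded_range_of_mem_projSet hub hv0 hv)).isCompact_closure hγ hβ hδ hc₁ hc₂
    (fun ℓ => subset_closure ⟨Set.mem_range_self _, Set.mem_range_self _⟩)
    ⟨m, Set.forall_mem_range.2 fun ℓ =>
      (hm ⟨u (ℓ + 1), subset_closure (Set.mem_range_self _), rfl⟩).trans (le_qpen hτ.le _ _)⟩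
    (fun ℓ => hdir (ℓ + 1)) (fun ℓ => (hα (ℓ + 1)).2) (fun ℓ => hdesc (ℓ + 1))
  exact ⟨ℓ + 1, hℓ.le, hvD _, fun y hy => qpen_le_of_mem_projSet hτ.le (hv ℓ) hy⟩

/-- the inexact alternating minimization method cannot cycle infinitely:
running the iteration indefinitely, some iterate satisfies the stopping criterion
`‖∇_x q_τ(u^ℓ, v^ℓ)‖ ≤ δ`, and it moreover minimizes `q_τ(u^ℓ, ·)` over `D`. -/
theorem alternating_minimization_terminates
    (f : X → ℝ) (G : X → Y) (C : Set Y) (D : Set X)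
    (hf : ContDiff ℝ 1 f) (hG : ContDiff ℝ 1 G)
    (hCne : C.Nonempty) (hCcl : IsClosed C) (hCconv : Convex ℝ C)
    (hDne : D.Nonempty) (hDcl : IsClosed D)
    (PC : Y → Y) (hPC : ∀ w, PC w ∈ C ∧ ∀ c ∈ C, ‖PC w - w‖ ≤ ‖c - w‖)
    (hlev : ∀ η : ℝ, Bornology.IsBounded {x : X | f x ≤ η})
    (τ δ γ β : ℝ) (hτ : 0 < τ) (hδ : 0 < δ) (hγ : 0 < γ ∧ γ < 1) (hβ : 0 < β ∧ β < 1)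
    (c₁ c₂ : ℝ) (hc₁ : 0 < c₁) (hc₂ : 0 < c₂)
    (u v d : ℕ → X) (H : ℕ → X →L[ℝ] X) (α : ℕ → ℝ)
    (hv0 : v 0 ∈ D)
    (hself : ∀ ℓ, ∀ z w : X, ⟪(H ℓ) z, w⟫ = ⟪z, (H ℓ) w⟫)
    (heig : ∀ ℓ, ∀ z : X, c₁ * ‖z‖ ^ 2 ≤ ⟪z, (H ℓ) z⟫ ∧ ⟪z, (H ℓ) z⟫ ≤ c₂ * ‖z‖ ^ 2)
    (hd : ∀ ℓ, d ℓ = -(H ℓ) (gradqx f G PC τ (u ℓ) (v ℓ)))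
    (hα : ∀ ℓ, (∃ j : ℕ, α ℓ = β ^ j ∧
        armijoCond f G PC τ γ (u ℓ) (v ℓ) (d ℓ) (β ^ j)) ∧
      ∀ j : ℕ, armijoCond f G PC τ γ (u ℓ) (v ℓ) (d ℓ) (β ^ j) → β ^ j ≤ α ℓ)
    (hu : ∀ ℓ, u (ℓ + 1) = u ℓ + α ℓ • d ℓ)
    (hv : ∀ ℓ, v (ℓ + 1) ∈ projSet D (u (ℓ + 1))) :
    ∃ ℓ : ℕ, ‖gradqx f G PC τ (u ℓ) (v ℓ)‖ ≤ δ ∧ v ℓ ∈ D ∧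
      ∀ yy ∈ D, qpen f G PC τ (u ℓ) (v ℓ) ≤ qpen f G PC τ (u ℓ) yy :=
  alternating_minimization_terminates_general f G C D hf hG hCconv PC hPC hlev τ δ γ β hτ hδ hγ hβ
    c₁ c₂ hc₁ hc₂ u v d H α hv0 hself heig hd hα hu hv
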